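/- arXiv:2105.12060 — 6 statements merged into one kernel-verified Lean document; each statement's English description precedes it below -/
import Mathlib

section
/- For any quantum channel Φ acting on system A, and any quantum-incoherent state ρ^{AB} = Σ_i p_i ρ^A_i ⊗ |i⟩⟨i|, there exists an index n such that C_r((Φ⊗id)[ρ^{AB}]) − C_r(ρ^{AB}) ≤ C_r(Φ[ρ^A_n]) − C_r(ρ^A_n). -/
open scoped Kronecker
open Matrix
open scoped ComplexOrder

/-- A density matrix: positive semidefinite with unit trace. -/
def IsDensity {n : Type*} [Fintype n] (ρ : Matrix n n ℂ) : Prop :=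
  ρ.PosSemidef ∧ ρ.trace = 1

/-- Complete dephasing in the reference basis. -/
def dephase {n : Type*} [Fintype n] [DecidableEq n] (ρ : Matrix n n ℂ) : Matrix n n ℂ :=
  Matrix.diagonal (fun i => ρ i i)

/-- Dephasing of system B only. -/
def dephaseB {a b : Type*} (ρ : Matrix (a × b) (a × b) ℂ) [DecidableEq b] :
    Matrix (a × b) (a × b) ℂ :=
  Matrix.of fun p q => if p.2 = q.2 then ρ p q else 0

/-- Von Neumann entropy with base-2 logarithm (0 for non-Hermitian input). -/
noncomputable def vNEnt {n : Type*} [Fintype n] [DecidableEq n] (ρ : Matrix n n ℂ) : ℝ :=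
  if h : ρ.IsHermitian then ∑ i, -(h.eigenvalues i * Real.logb 2 (h.eigenvalues i)) else 0

/-- Relative entropy of coherence. -/
noncomputable def Cr {n : Type*} [Fintype n] [DecidableEq n] (ρ : Matrix n n ℂ) : ℝ :=
  vNEnt (dephase ρ) - vNEnt ρ

/-- Base-2 matrix logarithm of a Hermitian matrix (with log 0 = 0 convention). -/
noncomputable def matLog2 {n : Type*} [Fintype n] [DecidableEq n] (ρ : Matrix n n ℂ) :
    Matrix n n ℂ :=
  if h : ρ.IsHermitian then
    (h.eigenvectorUnitary : Matrix n n ℂ) *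
      Matrix.diagonal (fun i => (Real.logb 2 (h.eigenvalues i) : ℂ)) *
      star (h.eigenvectorUnitary : Matrix n n ℂ)
  else 0

open scoped Classical in
/-- Quantum relative entropy S(ρ‖σ) (base 2), with value ⊤ when supp ρ ⊄ supp σ. -/
noncomputable def qRelEnt {n : Type*} [Fintype n] [DecidableEq n]
    (ρ σ : Matrix n n ℂ) : EReal :=
  if ∀ x : n → ℂ, σ *ᵥ x = 0 → ρ *ᵥ x = 0 then
    (((ρ * matLog2 ρ).trace - (ρ * matLog2 σ).trace).re : EReal)
  else ⊤

/-- The action of a channel given by Kraus operators. -/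
noncomputable def chanApply {ι n m : Type*} [Fintype ι] [Fintype n] [Fintype m]
    (K : ι → Matrix m n ℂ) (ρ : Matrix n n ℂ) : Matrix m m ℂ :=
  ∑ i, K i * ρ * (K i)ᴴ

/-- Trace preservation for a Kraus family. -/
def IsTPKraus {ι n m : Type*} [Fintype ι] [Fintype n] [Fintype m] [DecidableEq n]
    (K : ι → Matrix m n ℂ) : Prop :=
  ∑ i, (K i)ᴴ * K i = 1

/-- The action of Φ ⊗ id on a bipartite state. -/
noncomputable def chanApplyExt {ι n m b : Type*} [Fintype ι] [Fintype n] [Fintype m]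
    [Fintype b] [DecidableEq b]
    (K : ι → Matrix m n ℂ) (ρ : Matrix (n × b) (n × b) ℂ) : Matrix (m × b) (m × b) ℂ :=
  ∑ i, (K i ⊗ₖ (1 : Matrix b b ℂ)) * ρ * (K i ⊗ₖ (1 : Matrix b b ℂ))ᴴ

/-- Partial trace over system A. -/
noncomputable def ptraceA {a b : Type*} [Fintype a] (ρ : Matrix (a × b) (a × b) ℂ) : Matrix b b ℂ :=
  Matrix.of fun j j' => ∑ i, ρ (i, j) (i, j')

/-- Partial trace over system B. -/
noncomputable def ptraceB {a b : Type*} [Fintype b] (ρ : Matrix (a × b) (a × b) ℂ) : Matrix a a ℂ :=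
  Matrix.of fun i i' => ∑ j, ρ (i, j) (i', j)

/-- ℓ₁-norm of coherence. -/
noncomputable def Cl1 {n : Type*} [Fintype n] [DecidableEq n] (ρ : Matrix n n ℂ) : ℝ :=
  ∑ i, ∑ j, if i = j then 0 else ‖ρ i j‖

/-- The projector onto the maximally coherent state |+_d⟩. -/
noncomputable def plusProj (d : ℕ) : Matrix (Fin d) (Fin d) ℂ :=
  Matrix.of fun _ _ => (1 / d : ℂ)


section AuxLemmas
open Polynomial

lemma charpoly_unitary_conj {n : Type*} [Fintype n] [DecidableEq n]
    {U : Matrix n n ℂ} (hU : U ∈ Matrix.unitaryGroup n ℂ) (A : Matrix n n ℂ) :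
    (U * A * star U).charpoly = A.charpoly := by
  have hUV : U * star U = 1 := mem_unitaryGroup_iff.mp hU
  have hmap : (U.map (C : ℂ →+* ℂ[X])) * ((star U).map (C : ℂ →+* ℂ[X])) = 1 := by
    rw [← Matrix.map_mul, hUV, Matrix.map_one _ (map_zero _) (map_one _)]
  have hcm : charmatrix (U * A * star U) =
      U.map (C : ℂ →+* ℂ[X]) * charmatrix A * (star U).map (C : ℂ →+* ℂ[X]) := by
    unfold charmatrix
    rw [Matrix.mul_sub, Matrix.sub_mul, RingHom.mapMatrix_apply, RingHom.mapMatrix_apply,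
      Matrix.map_mul, Matrix.map_mul]
    congr 1
    rw [mul_assoc, scalar_commute (X : ℂ[X]) (Commute.all _) _, ← mul_assoc, hmap,
      one_mul]
  rw [Matrix.charpoly, Matrix.charpoly, hcm, det_mul, det_mul]
  rw [mul_right_comm, ← det_mul, hmap, det_one, one_mul]

lemma charpoly_diagonal' {n : Type*} [Fintype n] [DecidableEq n] (d : n → ℂ) :
    (Matrix.diagonal d).charpoly = ∏ i, (X - C (d i)) := by
  have : charmatrix (Matrix.diagonal d) = Matrix.diagonal (fun i => X - C (d i)) := by
    ext i j
    by_cases h : i = j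
    · subst h; simp
    · simp [h, charmatrix_apply_ne _ _ _ h, Matrix.diagonal_apply_ne _ h]
  rw [Matrix.charpoly, this, det_diagonal]

lemma vNEnt_conj_diag {n : Type*} [Fintype n] [DecidableEq n]
    {U : Matrix n n ℂ} (hU : U ∈ Matrix.unitaryGroup n ℂ) (d : n → ℝ) :
    vNEnt (U * Matrix.diagonal (fun i => (d i : ℂ)) * star U)
      = ∑ i, -(d i * Real.logb 2 (d i)) := by
  set A := U * Matrix.diagonal (fun i => (d i : ℂ)) * star U with hAdef
  have hD : (Matrix.diagonal (fun i => (d i : ℂ)))ᴴ = Matrix.diagonal (fun i => (d i : ℂ)) := by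
    have h0 : (star fun i => ((d i : ℝ) : ℂ)) = fun i => ((d i : ℝ) : ℂ) := by
      funext i
      simp [Pi.star_apply, Complex.star_def, Complex.conj_ofReal]
    rw [Matrix.diagonal_conjTranspose, h0]
  have hA : A.IsHermitian := by
    rw [Matrix.IsHermitian, hAdef, star_eq_conjTranspose]
    simp only [Matrix.conjTranspose_mul, Matrix.conjTranspose_conjTranspose, hD,
      Matrix.mul_assoc]
  have hch1 : A.charpoly = (Matrix.diagonal (fun i => (d i : ℂ))).charpoly :=
    charpoly_unitary_conj hU _
  have hch2 : A.charpoly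
      = (Matrix.diagonal (RCLike.ofReal ∘ hA.eigenvalues : n → ℂ)).charpoly := by
    conv_lhs => rw [hA.spectral_theorem]
    exact charpoly_unitary_conj hA.eigenvectorUnitary.2 _
  have hmult : Multiset.map (fun i => ((hA.eigenvalues i : ℝ) : ℂ)) Finset.univ.val
      = Multiset.map (fun i => ((d i : ℝ) : ℂ)) Finset.univ.val := by
    have h1 := congrArg Polynomial.roots (hch2.symm.trans hch1)
    rw [charpoly_diagonal', charpoly_diagonal'] at h1
    rw [Finset.prod_eq_multiset_prod, Finset.prod_eq_multiset_prod] at h1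
    rw [show (Multiset.map (fun i => X - C ((RCLike.ofReal ∘ hA.eigenvalues : n → ℂ) i))
        Finset.univ.val)
        = Multiset.map (fun a : ℂ => X - C a)
            (Multiset.map (fun i => ((hA.eigenvalues i : ℝ) : ℂ)) Finset.univ.val) by
      rw [Multiset.map_map]; rfl] at h1
    rw [show (Multiset.map (fun i => X - C ((d i : ℂ))) Finset.univ.val)
        = Multiset.map (fun a : ℂ => X - C a)
            (Multiset.map (fun i => ((d i : ℝ) : ℂ)) Finset.univ.val) by
      rw [Multiset.map_map]; rfl] at h1
    rwa [roots_multiset_prod_X_sub_C, roots_multiset_prod_X_sub_C] at h1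
  have hsum := congrArg (fun s : Multiset ℂ =>
      (Multiset.map (fun z : ℂ => -(z.re * Real.logb 2 z.re)) s).sum) hmult
  simp only [Multiset.map_map, Function.comp] at hsum
  rw [vNEnt, dif_pos hA]
  simpa [Complex.ofReal_re] using hsum

lemma vNEnt_herm {n : Type*} [Fintype n] [DecidableEq n] {ρ : Matrix n n ℂ}
    (h : ρ.IsHermitian) :
    vNEnt ρ = ∑ i, -(h.eigenvalues i * Real.logb 2 (h.eigenvalues i)) := dif_pos h

lemma vNEnt_diagonal_real {n : Type*} [Fintype n] [DecidableEq n] (d : n → ℝ) :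
    vNEnt (Matrix.diagonal (fun i => (d i : ℂ))) = ∑ i, -(d i * Real.logb 2 (d i)) := by
  have h := vNEnt_conj_diag (Submonoid.one_mem (Matrix.unitaryGroup n ℂ)) d
  simpa using h

lemma vNEnt_blockDiagonal {m o : Type*} [Fintype m] [DecidableEq m] [Fintype o]
    [DecidableEq o] (σ : o → Matrix m m ℂ) (hσ : ∀ b, (σ b).IsHermitian) :
    vNEnt (Matrix.blockDiagonal σ) = ∑ b, vNEnt (σ b) := by
  set V : o → Matrix m m ℂ := fun b => ((hσ b).eigenvectorUnitary : Matrix m m ℂ) with hV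
  have hVb : ∀ b, V b * star (V b) = 1 := fun b =>
    mem_unitaryGroup_iff.mp (hσ b).eigenvectorUnitary.2
  have hU : Matrix.blockDiagonal V ∈ Matrix.unitaryGroup (m × o) ℂ := by
    rw [mem_unitaryGroup_iff, star_eq_conjTranspose, Matrix.blockDiagonal_conjTranspose,
      ← Matrix.blockDiagonal_mul]
    simp only [← star_eq_conjTranspose, hVb]
    exact Matrix.blockDiagonal_one
  have hdec : Matrix.blockDiagonal σ = Matrix.blockDiagonal V *
      Matrix.diagonal (fun p : m × o => (((hσ p.2).eigenvalues p.1 : ℝ) : ℂ)) *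
      star (Matrix.blockDiagonal V) := by
    rw [star_eq_conjTranspose, Matrix.blockDiagonal_conjTranspose,
      show (Matrix.diagonal fun p : m × o => (((hσ p.2).eigenvalues p.1 : ℝ) : ℂ))
          = Matrix.blockDiagonal (fun b => Matrix.diagonal
              (fun a => (((hσ b).eigenvalues a : ℝ) : ℂ))) from
        (Matrix.blockDiagonal_diagonal fun b a => (((hσ b).eigenvalues a : ℝ) : ℂ)).symm,
      ← Matrix.blockDiagonal_mul, ← Matrix.blockDiagonal_mul]
    refine congrArg Matrix.blockDiagonal (funext fun b => ?_)
    rw [← star_eq_conjTranspose]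
    exact (hσ b).spectral_theorem
  rw [hdec, vNEnt_conj_diag hU (fun p : m × o => (hσ p.2).eigenvalues p.1)]
  rw [Fintype.sum_prod_type]
  rw [Finset.sum_comm]
  exact Finset.sum_congr rfl fun b _ => (vNEnt_herm (hσ b)).symm

lemma dephase_hermitian {n : Type*} [Fintype n] [DecidableEq n] {ρ : Matrix n n ℂ}
    (h : ρ.IsHermitian) : (dephase ρ).IsHermitian := by
  rw [Matrix.IsHermitian, dephase, Matrix.diagonal_conjTranspose]
  have h0 : (star fun i => ρ i i) = fun i => ρ i i := by
    funext i
    simpa [Pi.star_apply] using congrFun (congrFun h.eq i) i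
  rw [h0]

lemma dephase_blockDiagonal {m o : Type*} [Fintype m] [DecidableEq m] [Fintype o]
    [DecidableEq o] (σ : o → Matrix m m ℂ) :
    dephase (Matrix.blockDiagonal σ) = Matrix.blockDiagonal (fun b => dephase (σ b)) := by
  ext ⟨a, b⟩ ⟨a', b'⟩
  simp only [dephase, Matrix.diagonal_apply, Matrix.blockDiagonal_apply, Prod.mk.injEq]
  by_cases hb : b = b'
  · subst hb
    by_cases ha : a = a' <;> simp [ha, Matrix.diagonal_apply]
  · simp [hb]

lemma Cr_blockDiagonal {m o : Type*} [Fintype m] [DecidableEq m] [Fintype o]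
    [DecidableEq o] (σ : o → Matrix m m ℂ) (hσ : ∀ b, (σ b).IsHermitian) :
    Cr (Matrix.blockDiagonal σ) = ∑ b, Cr (σ b) := by
  rw [Cr, dephase_blockDiagonal, vNEnt_blockDiagonal _ (fun b => dephase_hermitian (hσ b)),
    vNEnt_blockDiagonal _ hσ, ← Finset.sum_sub_distrib]
  rfl

lemma entf_smul {p : ℝ} (hp : 0 ≤ p) (x : ℝ) :
    -((p * x) * Real.logb 2 (p * x))
      = p * -(x * Real.logb 2 x) - (p * Real.logb 2 p) * x := by
  rcases eq_or_lt_of_le hp with h | h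
  · simp [← h]
  · by_cases hx : x = 0
    · simp [hx]
    · rw [Real.logb, Real.log_mul (ne_of_gt h) hx]
      rw [Real.logb, Real.logb]
      ring

lemma diag_real {n : Type*} [Fintype n] [DecidableEq n] {M : Matrix n n ℂ}
    (hM : M.IsHermitian) (i : n) : M i i = ((M i i).re : ℂ) := by
  have := congrFun (congrFun hM.eq i) i
  simp only [Matrix.conjTranspose_apply] at this
  exact (Complex.conj_eq_iff_re.mp this).symm

lemma Cr_smul {n : Type*} [Fintype n] [DecidableEq n] {M : Matrix n n ℂ}
    (hM : M.IsHermitian) {p : ℝ} (hp : 0 ≤ p) :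
    Cr ((p : ℂ) • M) = p * Cr M := by
  set lam := hM.eigenvalues with hlam
  set d : n → ℝ := fun i => (M i i).re with hd
  -- eigen side
  have h1 : (p : ℂ) • M = (hM.eigenvectorUnitary : Matrix n n ℂ) *
      Matrix.diagonal (fun i => ((p * lam i : ℝ) : ℂ)) *
      star (hM.eigenvectorUnitary : Matrix n n ℂ) := by
    have hD : ((p : ℂ)) • Matrix.diagonal (RCLike.ofReal ∘ hM.eigenvalues : n → ℂ)
        = Matrix.diagonal (fun i => ((p * lam i : ℝ) : ℂ)) := by
      rw [← Matrix.diagonal_smul]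
      refine congrArg Matrix.diagonal (funext fun i => ?_)
      show (p : ℂ) * ((lam i : ℝ) : ℂ) = ((p * lam i : ℝ) : ℂ)
      push_cast
      ring
    conv_lhs => rw [hM.spectral_theorem, Unitary.conjStarAlgAut_apply]
    conv_rhs => rw [← hD, mul_smul_comm, smul_mul_assoc]
  have hvs : vNEnt ((p : ℂ) • M) = ∑ i, -((p * lam i) * Real.logb 2 (p * lam i)) := by
    rw [h1]; exact vNEnt_conj_diag hM.eigenvectorUnitary.2 _
  -- dephase side
  have hdM : dephase M = Matrix.diagonal (fun i => ((d i : ℝ) : ℂ)) := by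
    rw [dephase]; exact congrArg Matrix.diagonal (funext fun i => diag_real hM i)
  have h2 : dephase ((p : ℂ) • M) = Matrix.diagonal (fun i => ((p * d i : ℝ) : ℂ)) := by
    rw [dephase]
    refine congrArg Matrix.diagonal (funext fun i => ?_)
    show (p : ℂ) * M i i = ((p * d i : ℝ) : ℂ)
    rw [diag_real hM i]
    push_cast
    ring
  have hds : vNEnt (dephase ((p : ℂ) • M)) = ∑ i, -((p * d i) * Real.logb 2 (p * d i)) := by
    rw [h2]; exact vNEnt_diagonal_real _
  -- trace identity
  have htr : ∑ i, lam i = ∑ i, d i := by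
    have h3 : M.trace = ∑ i, ((lam i : ℝ) : ℂ) := by
      conv_lhs => rw [hM.spectral_theorem, Unitary.conjStarAlgAut_apply]
      rw [Matrix.trace_mul_cycle]
      rw [mem_unitaryGroup_iff'.mp hM.eigenvectorUnitary.2, one_mul, Matrix.trace_diagonal]
      rfl
    have h4 := congrArg Complex.re h3
    rw [Matrix.trace] at h4
    simpa [Complex.re_sum, Matrix.diag] using h4.symm
  rw [Cr, Cr, hvs, hds, vNEnt_herm hM, ← hlam, hdM, vNEnt_diagonal_real]
  simp only [entf_smul hp]
  rw [Finset.sum_sub_distrib, Finset.sum_sub_distrib, ← Finset.mul_sum, ← Finset.mul_sum,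
    ← Finset.mul_sum, ← Finset.mul_sum, htr]
  ring

lemma kron_one_eq_blockDiagonal {m n b : Type*} [Fintype b] [DecidableEq b]
    (A : Matrix m n ℂ) :
    (A ⊗ₖ (1 : Matrix b b ℂ)) = Matrix.blockDiagonal (fun _ : b => A) := by
  ext ⟨a, i⟩ ⟨a', i'⟩
  simp [Matrix.blockDiagonal_apply, Matrix.one_apply, Matrix.kroneckerMap_apply, mul_ite]

lemma blockDiagonal_sum {m b ι : Type*} [Fintype b] [DecidableEq b] [Fintype ι]
    (f : ι → b → Matrix m m ℂ) :
    ∑ i, Matrix.blockDiagonal (f i) = Matrix.blockDiagonal (fun k => ∑ i, f i k) := by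
  ext ⟨a, j⟩ ⟨a', j'⟩
  simp only [Matrix.sum_apply, Matrix.blockDiagonal_apply]
  by_cases h : j = j' <;> simp [h]

lemma sum_kron_std {dA dB : ℕ} (p : Fin dB → ℝ) (ρ : Fin dB → Matrix (Fin dA) (Fin dA) ℂ) :
    ∑ i, (p i : ℂ) • (ρ i ⊗ₖ Matrix.single i i (1 : ℂ))
      = Matrix.blockDiagonal (fun i => (p i : ℂ) • ρ i) := by
  ext ⟨a, b⟩ ⟨a', b'⟩
  simp only [Matrix.sum_apply, Matrix.smul_apply, Matrix.kroneckerMap_apply,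
    Matrix.blockDiagonal_apply, Matrix.single, Matrix.of_apply, smul_eq_mul]
  by_cases h : b = b'
  · subst h
    rw [Finset.sum_eq_single b]
    · simp
    · intro c _ hc
      simp only [mul_ite, mul_one, mul_zero, ite_eq_right_iff, and_imp]
      exact fun hcb _ => absurd hcb hc
    · simp
  · rw [Finset.sum_eq_zero, if_neg h]
    intro c _
    by_cases hc : c = b'
    · subst hc; simp [fun hh : c = b => h (hh ▸ rfl), Ne.symm h]
    · simp [hc]

lemma chanApplyExt_blockDiagonal {dA dA' dB : ℕ} {κ : Type*} [Fintype κ]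
    (K : κ → Matrix (Fin dA') (Fin dA) ℂ) (σ : Fin dB → Matrix (Fin dA) (Fin dA) ℂ) :
    chanApplyExt K (Matrix.blockDiagonal σ)
      = Matrix.blockDiagonal (fun b => chanApply K (σ b)) := by
  rw [chanApplyExt]
  have h : ∀ i : κ, (K i ⊗ₖ (1 : Matrix (Fin dB) (Fin dB) ℂ)) * Matrix.blockDiagonal σ *
      (K i ⊗ₖ (1 : Matrix (Fin dB) (Fin dB) ℂ))ᴴ
      = Matrix.blockDiagonal (fun b => K i * σ b * (K i)ᴴ) := by
    intro i
    rw [kron_one_eq_blockDiagonal, Matrix.blockDiagonal_conjTranspose,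
      ← Matrix.blockDiagonal_mul, ← Matrix.blockDiagonal_mul]
  simp only [h]
  rw [blockDiagonal_sum]
  rfl

lemma chanApply_smul {κ n m : Type*} [Fintype κ] [Fintype n] [Fintype m]
    (K : κ → Matrix m n ℂ) (c : ℂ) (ρ : Matrix n n ℂ) :
    chanApply K (c • ρ) = c • chanApply K ρ := by
  simp [chanApply, Finset.smul_sum, Matrix.mul_smul, Matrix.smul_mul]

lemma chanApply_hermitian {κ n m : Type*} [Fintype κ] [Fintype n] [Fintype m]
    (K : κ → Matrix m n ℂ) {ρ : Matrix n n ℂ} (hρ : ρ.IsHermitian) :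
    (chanApply K ρ).IsHermitian := by
  rw [Matrix.IsHermitian, chanApply]
  rw [Matrix.conjTranspose_sum]
  refine Finset.sum_congr rfl fun i _ => ?_
  rw [Matrix.conjTranspose_mul, Matrix.conjTranspose_mul, Matrix.conjTranspose_conjTranspose,
    hρ.eq, Matrix.mul_assoc]

end AuxLemmas

/-- Lemma 1 of the paper. -/
theorem exists_index_coherence_gain_bound {dA dA' dB : ℕ} {ι : Type} [Fintype ι]
    (K : ι → Matrix (Fin dA') (Fin dA) ℂ) (hK : IsTPKraus K)
    (p : Fin dB → ℝ) (hp0 : ∀ i, 0 ≤ p i) (hp1 : ∑ i, p i = 1)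
    (ρ : Fin dB → Matrix (Fin dA) (Fin dA) ℂ) (hρ : ∀ i, IsDensity (ρ i)) :
    ∃ n : Fin dB,
      Cr (chanApplyExt K (∑ i, (p i : ℂ) • (ρ i ⊗ₖ Matrix.single i i (1 : ℂ)))) -
          Cr (∑ i, (p i : ℂ) • (ρ i ⊗ₖ Matrix.single i i (1 : ℂ)))
        ≤ Cr (chanApply K (ρ n)) - Cr (ρ n) := by
  classical
  set σ : Fin dB → Matrix (Fin dA) (Fin dA) ℂ := fun i => (p i : ℂ) • ρ i with hσdef
  have hsmulherm : ∀ (q : ℝ) (m : ℕ) (M : Matrix (Fin m) (Fin m) ℂ), M.IsHermitian →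
      ((q : ℂ) • M).IsHermitian := by
    intro q m M hM
    rw [Matrix.IsHermitian, Matrix.conjTranspose_smul, hM.eq]
    congr 1
    exact Complex.conj_ofReal q
  have hσh : ∀ b, (σ b).IsHermitian := fun b => hsmulherm (p b) dA (ρ b) (hρ b).1.1
  have hstate : (∑ i, (p i : ℂ) • (ρ i ⊗ₖ Matrix.single i i (1 : ℂ)))
      = Matrix.blockDiagonal σ := sum_kron_std p ρ
  have hCr1 : Cr (∑ i, (p i : ℂ) • (ρ i ⊗ₖ Matrix.single i i (1 : ℂ)))
      = ∑ b, p b * Cr (ρ b) := by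
    rw [hstate, Cr_blockDiagonal σ hσh]
    exact Finset.sum_congr rfl fun b _ => Cr_smul (hρ b).1.1 (hp0 b)
  have hCr2 : Cr (chanApplyExt K (∑ i, (p i : ℂ) • (ρ i ⊗ₖ Matrix.single i i (1 : ℂ))))
      = ∑ b, p b * Cr (chanApply K (ρ b)) := by
    rw [hstate, chanApplyExt_blockDiagonal K σ,
      Cr_blockDiagonal _ (fun b => chanApply_hermitian K (hσh b))]
    refine Finset.sum_congr rfl fun b _ => ?_
    rw [hσdef]
    simp only
    rw [chanApply_smul K ((p b : ℝ) : ℂ) (ρ b)]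
    exact Cr_smul (chanApply_hermitian K (hρ b).1.1) (hp0 b)
  have hne : (Finset.univ : Finset (Fin dB)).Nonempty := by
    rcases Finset.eq_empty_or_nonempty (Finset.univ : Finset (Fin dB)) with h | h
    · rw [h, Finset.sum_empty] at hp1
      norm_num at hp1
    · exact h
  obtain ⟨n, -, hmax⟩ := Finset.exists_max_image Finset.univ
    (fun b => Cr (chanApply K (ρ b)) - Cr (ρ b)) hne
  refine ⟨n, ?_⟩
  rw [hCr2, hCr1, ← Finset.sum_sub_distrib]
  calc ∑ b, (p b * Cr (chanApply K (ρ b)) - p b * Cr (ρ b))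
      = ∑ b, p b * (Cr (chanApply K (ρ b)) - Cr (ρ b)) := by
        refine Finset.sum_congr rfl fun b _ => ?_
        ring
    _ ≤ ∑ b, p b * (Cr (chanApply K (ρ n)) - Cr (ρ n)) :=
        Finset.sum_le_sum fun b _ =>
          mul_le_mul_of_nonneg_left (hmax b (Finset.mem_univ b)) (hp0 b)
    _ = (∑ b, p b) * (Cr (chanApply K (ρ n)) - Cr (ρ n)) := by rw [← Finset.sum_mul]
    _ = Cr (chanApply K (ρ n)) - Cr (ρ n) := by rw [hp1, one_mul]
end

section
/- For bipartite states, the relative entropy of coherence decomposes via relative entropies: C_r(ρ^{AB}) = S(ρ^{AB} ‖ Δ^B[ρ^{AB}]) + S(Δ^B[ρ^{AB}] ‖ Δ^{AB}[ρ^{AB}]), where Δ^B dephases only system B and Δ^{AB} dephases both systems in the reference basis. -/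
open scoped Kronecker
open Matrix
open scoped ComplexOrder

namespace CrAux

open Matrix Polynomial
open scoped ComplexOrder


set_option linter.unusedSectionVars false

variable {n κ : Type*} [Fintype n] [DecidableEq n] [Fintype κ] [DecidableEq κ]

/-- Pinching in the reference basis along a coloring `c`. -/
def pinch (c : n → κ) (ρ : Matrix n n ℂ) : Matrix n n ℂ :=
  Matrix.of fun p q => if c p = c q then ρ p q else 0

/-- Block projector. -/
def blockP (c : n → κ) (k : κ) : Matrix n n ℂ :=
  Matrix.diagonal (fun p => if c p = k then (1 : ℂ) else 0)

lemma blockP_conjTranspose (c : n → κ) (k : κ) : (blockP c k)ᴴ = blockP c k := by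
  ext p q
  simp [blockP, Matrix.diagonal_apply, Matrix.conjTranspose_apply, eq_comm]
  split_ifs with h1 h2 <;> simp_all [eq_comm]

lemma pinch_eq_sum (c : n → κ) (ρ : Matrix n n ℂ) :
    pinch c ρ = ∑ k : κ, blockP c k * ρ * blockP c k := by
  ext p q
  simp only [Finset.sum_apply, Matrix.sum_apply, pinch, Matrix.of_apply, blockP,
    Matrix.diagonal_mul, Matrix.mul_diagonal]
  simp only [ite_mul, one_mul, zero_mul, mul_ite, mul_one, mul_zero]
  rw [Finset.sum_ite_eq Finset.univ (c q)]
  simp only [Finset.mem_univ, if_true]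

lemma pinch_isHermitian {c : n → κ} {ρ : Matrix n n ℂ} (h : ρ.IsHermitian) :
    (pinch c ρ).IsHermitian := by
  ext p q
  simp only [Matrix.conjTranspose_apply, pinch, Matrix.of_apply]
  by_cases hc : c q = c p
  · rw [if_pos hc, if_pos hc.symm, ← Matrix.conjTranspose_apply, h.eq]
  · rw [if_neg hc, if_neg (fun h' => hc h'.symm), star_zero]

lemma pinch_posSemidef {c : n → κ} {ρ : Matrix n n ℂ} (h : ρ.PosSemidef) :
    (pinch c ρ).PosSemidef := by
  rw [pinch_eq_sum]
  refine Finset.sum_induction _ _ (fun a b ha hb => ha.add hb) Matrix.PosSemidef.zero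
    (fun k _ => ?_)
  have := h.mul_mul_conjTranspose_same (blockP c k)
  rwa [blockP_conjTranspose] at this


lemma sum_mulVec' {ι : Type*} (s : Finset ι) (M : ι → Matrix n n ℂ) (x : n → ℂ) :
    (∑ k ∈ s, M k) *ᵥ x = ∑ k ∈ s, M k *ᵥ x := by
  induction s using Finset.cons_induction with
  | empty => simp [Matrix.zero_mulVec]
  | cons a s ha ih => simp [Finset.sum_cons, Matrix.add_mulVec, ih]

lemma mulVec_sumVec {ι : Type*} (s : Finset ι) (M : Matrix n n ℂ) (v : ι → n → ℂ) :
    M *ᵥ (∑ k ∈ s, v k) = ∑ k ∈ s, M *ᵥ v k := by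
  induction s using Finset.cons_induction with
  | empty => simp [Matrix.mulVec_zero]
  | cons a s ha ih => simp [Finset.sum_cons, Matrix.mulVec_add, ih]

lemma dotProduct_sumVec {ι : Type*} (s : Finset ι) (x : n → ℂ) (v : ι → n → ℂ) :
    x ⬝ᵥ (∑ k ∈ s, v k) = ∑ k ∈ s, x ⬝ᵥ v k := by
  induction s using Finset.cons_induction with
  | empty => simp
  | cons a s ha ih => simp [Finset.sum_cons, dotProduct_add, ih]

lemma sum_blockP_mulVec (c : n → κ) (x : n → ℂ) :
    ∑ k : κ, blockP c k *ᵥ x = x := by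
  funext p
  simp only [Finset.sum_apply, blockP, Matrix.mulVec_diagonal, ite_mul, one_mul, zero_mul]
  rw [Finset.sum_ite_eq Finset.univ (c p)]
  simp

lemma pinch_support {c : n → κ} {ρ : Matrix n n ℂ} (hρ : ρ.PosSemidef) (x : n → ℂ)
    (hx : pinch c ρ *ᵥ x = 0) : ρ *ᵥ x = 0 := by
  have hterm : ∀ k, star x ⬝ᵥ (blockP c k * ρ * blockP c k) *ᵥ x
      = star (blockP c k *ᵥ x) ⬝ᵥ ρ *ᵥ (blockP c k *ᵥ x) := by
    intro k
    rw [star_mulVec, blockP_conjTranspose, ← Matrix.dotProduct_mulVec,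
      Matrix.mulVec_mulVec, ← Matrix.mulVec_mulVec, ← Matrix.mulVec_mulVec,
      Matrix.mulVec_mulVec, Matrix.mulVec_mulVec]
  have h0 : ∑ k : κ, star (blockP c k *ᵥ x) ⬝ᵥ ρ *ᵥ (blockP c k *ᵥ x) = 0 := by
    have : star x ⬝ᵥ pinch c ρ *ᵥ x = 0 := by rw [hx, dotProduct_zero]
    rw [pinch_eq_sum, sum_mulVec', dotProduct_sumVec] at this
    rw [← this]
    exact Finset.sum_congr rfl fun k _ => (hterm k).symm
  have hzero : ∀ k : κ, ρ *ᵥ (blockP c k *ᵥ x) = 0 := by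
    intro k
    rw [← hρ.dotProduct_mulVec_zero_iff]
    refine (Finset.sum_eq_zero_iff_of_nonneg (fun k _ => hρ.dotProduct_mulVec_nonneg _)).mp h0 k (Finset.mem_univ k)
  calc ρ *ᵥ x = ρ *ᵥ (∑ k : κ, blockP c k *ᵥ x) := by rw [sum_blockP_mulVec]
    _ = ∑ k : κ, ρ *ᵥ (blockP c k *ᵥ x) := mulVec_sumVec _ _ _
    _ = 0 := by simp [hzero]


/-- The subalgebra of `c`-block-diagonal matrices. -/
def pinchAlg (c : n → κ) : Subalgebra ℂ (Matrix n n ℂ) where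
  carrier := {M | ∀ p q, c p ≠ c q → M p q = 0}
  mul_mem' := by
    intro M N hM hN p q h
    rw [Matrix.mul_apply]
    refine Finset.sum_eq_zero fun r _ => ?_
    by_cases hr : c p = c r
    · rw [hN r q (fun h' => h (hr.trans h')), mul_zero]
    · rw [hM p r hr, zero_mul]
  add_mem' := by
    intro M N hM hN p q h
    simp [Matrix.add_apply, hM p q h, hN p q h]
  algebraMap_mem' := by
    intro r p q h
    have hpq : p ≠ q := fun h' => h (by rw [h'])
    simp [Matrix.algebraMap_matrix_apply, hpq]

lemma pinch_mem (c : n → κ) (ρ : Matrix n n ℂ) : pinch c ρ ∈ pinchAlg c := by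
  intro p q h
  simp [pinch, h]

/-- Conjugation by a unitary as an algebra hom. -/
noncomputable def conjAlgHom (U : Matrix.unitaryGroup n ℂ) :
    Matrix n n ℂ →ₐ[ℂ] Matrix n n ℂ where
  toFun M := (U : Matrix n n ℂ) * M * star (U : Matrix n n ℂ)
  map_one' := by
    show (U : Matrix n n ℂ) * 1 * star (U : Matrix n n ℂ) = 1
    rw [mul_one]
    exact Matrix.mem_unitaryGroup_iff.mp U.2
  map_mul' M N := by
    have h2 : star (U : Matrix n n ℂ) * (U : Matrix n n ℂ) = 1 :=
      Matrix.mem_unitaryGroup_iff'.mp U.2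
    have key : star (U : Matrix n n ℂ) * ((U : Matrix n n ℂ) * (N * star (U : Matrix n n ℂ)))
        = N * star (U : Matrix n n ℂ) := by rw [← mul_assoc, h2, one_mul]
    simp only [mul_assoc, key]
  map_zero' := by simp
  map_add' M N := by simp [Matrix.mul_add, Matrix.add_mul]
  commutes' r := by
    simp only [Algebra.algebraMap_eq_smul_one, Matrix.mul_smul, Matrix.smul_mul, mul_one]
    rw [Matrix.mem_unitaryGroup_iff.mp U.2]

@[simp] lemma conjAlgHom_apply (U : Matrix.unitaryGroup n ℂ) (M : Matrix n n ℂ) :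
    conjAlgHom U M = (U : Matrix n n ℂ) * M * star (U : Matrix n n ℂ) := rfl

lemma aeval_diagonal' (d : n → ℂ) (p : ℂ[X]) :
    aeval (Matrix.diagonal d) p = Matrix.diagonal (fun i => p.eval (d i)) := by
  rw [show Matrix.diagonal d = Matrix.diagonalAlgHom (n := n) ℂ d from rfl,
    Polynomial.aeval_algHom_apply]
  simp only [Matrix.diagonalAlgHom_apply]
  have h : ((aeval d) p : n → ℂ) = fun i => p.eval (d i) := by
    funext i
    rw [Polynomial.aeval_fn_apply]
    exact congrFun (Polynomial.coe_aeval_eq_eval (d i)) p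
  rw [h]

/-- `matLog2` of a Hermitian matrix is a polynomial in the matrix. -/
lemma matLog2_eq_aeval {σ : Matrix n n ℂ} (hσ : σ.IsHermitian) :
    ∃ p : ℂ[X], matLog2 σ = aeval σ p := by
  classical
  set s : Finset ℂ := Finset.univ.image (fun i => ((hσ.eigenvalues i : ℝ) : ℂ)) with hs
  set p : ℂ[X] := Lagrange.interpolate s id (fun z => ((Real.logb 2 z.re : ℝ) : ℂ)) with hp
  refine ⟨p, ?_⟩
  have hev : ∀ i, p.eval ((hσ.eigenvalues i : ℝ) : ℂ)
      = ((Real.logb 2 (hσ.eigenvalues i) : ℝ) : ℂ) := by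
    intro i
    have hinj : Set.InjOn id (s : Set ℂ) := Function.injective_id.injOn
    have := Lagrange.eval_interpolate_at_node (v := id)
      (r := fun z => ((Real.logb 2 z.re : ℝ) : ℂ)) hinj
      (Finset.mem_image_of_mem _ (Finset.mem_univ i))
    rw [hp]
    simpa using this
  have hconj := Polynomial.aeval_algHom_apply (conjAlgHom hσ.eigenvectorUnitary)
    (Matrix.diagonal (RCLike.ofReal ∘ hσ.eigenvalues)) p
  have hspec : σ = conjAlgHom hσ.eigenvectorUnitary
      (Matrix.diagonal (RCLike.ofReal ∘ hσ.eigenvalues)) := hσ.spectral_theorem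
  rw [matLog2, dif_pos hσ]
  conv_rhs => rw [hspec]
  rw [hconj, aeval_diagonal', conjAlgHom_apply]
  congr 1
  congr 1
  exact congrArg Matrix.diagonal (funext fun i => (hev i).symm)


lemma matLog2_mem {c : n → κ} {σ : Matrix n n ℂ} (hσ : σ.IsHermitian)
    (hmem : σ ∈ pinchAlg c) : matLog2 σ ∈ pinchAlg c := by
  obtain ⟨p, hp⟩ := matLog2_eq_aeval hσ
  have h : (aeval (⟨σ, hmem⟩ : pinchAlg c) p : Matrix n n ℂ) = aeval σ p :=
    Polynomial.aeval_subalgebra_coe p _ _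
  rw [hp, ← h]
  exact SetLike.coe_mem _

lemma trace_pinch_mul (c : n → κ) (ρ M : Matrix n n ℂ) (hM : M ∈ pinchAlg c) :
    (pinch c ρ * M).trace = (ρ * M).trace := by
  simp only [Matrix.trace, Matrix.diag_apply, Matrix.mul_apply, pinch, Matrix.of_apply]
  refine Finset.sum_congr rfl fun p _ => Finset.sum_congr rfl fun q _ => ?_
  by_cases h : c p = c q
  · rw [if_pos h]
  · simp [if_neg h, hM q p (fun h' => h h'.symm)]

lemma trace_mul_matLog2_self {A : Matrix n n ℂ} (hA : A.IsHermitian) :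
    (A * matLog2 A).trace
      = ((∑ i, hA.eigenvalues i * Real.logb 2 (hA.eigenvalues i) : ℝ) : ℂ) := by
  rw [matLog2, dif_pos hA]
  set U : Matrix n n ℂ := (hA.eigenvectorUnitary : Matrix n n ℂ) with hU
  set L : Matrix n n ℂ := Matrix.diagonal (fun i => (Real.logb 2 (hA.eigenvalues i) : ℂ))
  have key : (A * (U * L * star U)).trace = (star U * A * U * L).trace := by
    rw [Matrix.trace_mul_comm]
    rw [show U * L * star U * A = U * (L * (star U * A)) by simp only [mul_assoc]]
    rw [Matrix.trace_mul_comm]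
    simp only [mul_assoc]
    rw [Matrix.trace_mul_comm]
    simp only [mul_assoc]
  have hd : star U * A * U = Matrix.diagonal (RCLike.ofReal ∘ hA.eigenvalues) := by
    rw [← hA.conjStarAlgAut_star_eigenvectorUnitary, Unitary.conjStarAlgAut_star_apply]
  rw [key, hd, Matrix.diagonal_mul_diagonal,
    Matrix.trace_diagonal]
  push_cast
  rfl

end CrAux


/-- decomposition of bipartite relative entropy of coherence. -/
theorem Cr_decomposition_via_relEnt {dA dB : ℕ}
    (ρAB : Matrix (Fin dA × Fin dB) (Fin dA × Fin dB) ℂ) (hρ : IsDensity ρAB) :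
    ((Cr ρAB : ℝ) : EReal) =
      qRelEnt ρAB (dephaseB ρAB) + qRelEnt (dephaseB ρAB) (dephase ρAB) := by
  classical
  obtain ⟨hPSD, -⟩ := hρ
  have hρH : ρAB.IsHermitian := hPSD.1
  have hτσ : dephase ρAB = CrAux.pinch id (dephaseB ρAB) := by
    ext p q
    by_cases h : p = q
    · subst h; simp [dephase, CrAux.pinch, dephaseB, Matrix.diagonal_apply]
    · simp [dephase, CrAux.pinch, Matrix.diagonal_apply, h]
  have hτρ : dephase ρAB = CrAux.pinch id ρAB := by
    ext p q
    by_cases h : p = q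
    · subst h; simp [dephase, CrAux.pinch, Matrix.diagonal_apply]
    · simp [dephase, CrAux.pinch, Matrix.diagonal_apply, h]
  have hσPSD : (dephaseB ρAB).PosSemidef := CrAux.pinch_posSemidef (c := Prod.snd) hPSD
  have hσH : (dephaseB ρAB).IsHermitian := hσPSD.1
  have hτPSD : (dephase ρAB).PosSemidef := by
    rw [hτσ]; exact CrAux.pinch_posSemidef hσPSD
  have hτH : (dephase ρAB).IsHermitian := hτPSD.1
  have hs1 : ∀ x, dephaseB ρAB *ᵥ x = 0 → ρAB *ᵥ x = 0 := fun x hx =>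
    CrAux.pinch_support (c := Prod.snd) hPSD x hx
  have hs2 : ∀ x, dephase ρAB *ᵥ x = 0 → dephaseB ρAB *ᵥ x = 0 := by
    rw [hτσ]; exact fun x hx => CrAux.pinch_support hσPSD x hx
  have hmem1 : matLog2 (dephaseB ρAB) ∈ CrAux.pinchAlg Prod.snd :=
    CrAux.matLog2_mem hσH (CrAux.pinch_mem Prod.snd ρAB)
  have hmem2 : matLog2 (dephase ρAB) ∈ CrAux.pinchAlg (id : _ → _) :=
    CrAux.matLog2_mem hτH (by rw [hτρ]; exact CrAux.pinch_mem _ _)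
  have hcross1 : (dephaseB ρAB * matLog2 (dephaseB ρAB)).trace
      = (ρAB * matLog2 (dephaseB ρAB)).trace :=
    CrAux.trace_pinch_mul Prod.snd ρAB _ hmem1
  have hcross2' : ∀ M ∈ CrAux.pinchAlg (id : _ → _),
      (dephase ρAB * M).trace = (dephaseB ρAB * M).trace := by
    intro M hM
    rw [hτσ]
    exact CrAux.trace_pinch_mul id _ M hM
  have hcross2 := hcross2' _ hmem2
  have T1 := CrAux.trace_mul_matLog2_self hρH
  have T2 := CrAux.trace_mul_matLog2_self hσH
  have T3 := CrAux.trace_mul_matLog2_self hτH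
  rw [qRelEnt, qRelEnt, if_pos hs1, if_pos hs2, ← hcross1, ← hcross2, T1, T2, T3]
  rw [← Complex.ofReal_sub, ← Complex.ofReal_sub, Complex.ofReal_re, Complex.ofReal_re,
    ← EReal.coe_add]
  norm_cast
  rw [Cr, vNEnt, dif_pos hτH, vNEnt, dif_pos hρH]
  simp only [Finset.sum_neg_distrib]
  ring
end

section
/- The relative entropy of coherence admits the closed form C_r(ρ) = min over incoherent states σ of S(ρ‖σ) = S(Δ[ρ]) − S(ρ), i.e., the dephased state Δ[ρ] is the closest incoherent state to ρ in relative entropy. -/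
open scoped Kronecker
open Matrix
open scoped ComplexOrder

section crAux
set_option linter.unusedSectionVars false
open Matrix
variable {n : Type*} [Fintype n] [DecidableEq n]

lemma crAux_star_mul_self_mul_eq_diagonal {A : Matrix n n ℂ} (hA : A.IsHermitian) :
    star (hA.eigenvectorUnitary : Matrix n n ℂ) * A * (hA.eigenvectorUnitary : Matrix n n ℂ)
      = Matrix.diagonal (RCLike.ofReal ∘ hA.eigenvalues) := by
  have := hA.conjStarAlgAut_star_eigenvectorUnitary
  simpa using this

lemma crAux_isHermitian_diag_real (d : n → ℝ) :
    (Matrix.diagonal (fun i => (d i : ℂ))).IsHermitian := by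
  refine Matrix.isHermitian_diagonal_of_self_adjoint _ ?_
  funext i
  exact Complex.conj_ofReal _

lemma crAux_diag_col_rel (d : n → ℝ) (hA : (Matrix.diagonal (fun i => (d i : ℂ))).IsHermitian)
    (i j : n) :
    (d j : ℂ) * (hA.eigenvectorUnitary : Matrix n n ℂ) j i
      = (hA.eigenvalues i : ℂ) * (hA.eigenvectorUnitary : Matrix n n ℂ) j i := by
  set U := (hA.eigenvectorUnitary : Matrix n n ℂ) with hU
  have h2 : Matrix.diagonal (fun i => (d i : ℂ)) * U
      = U * Matrix.diagonal (RCLike.ofReal ∘ hA.eigenvalues) := by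
    calc Matrix.diagonal (fun i => (d i : ℂ)) * U
        = U * (star U * Matrix.diagonal (fun i => (d i : ℂ)) * U) := by
          rw [← mul_assoc, ← mul_assoc,
            (Matrix.mem_unitaryGroup_iff).mp hA.eigenvectorUnitary.2, one_mul]
      _ = U * Matrix.diagonal (RCLike.ofReal ∘ hA.eigenvalues) := by
          rw [crAux_star_mul_self_mul_eq_diagonal hA]
  have h3 := congrFun (congrFun h2 j) i
  simpa [Matrix.diagonal_mul, Matrix.mul_diagonal, mul_comm, Function.comp,
    RCLike.ofReal_alg] using h3

lemma crAux_col_normSq (d : n → ℝ) (hA : (Matrix.diagonal (fun i => (d i : ℂ))).IsHermitian)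
    (i : n) : ∑ j, Complex.normSq ((hA.eigenvectorUnitary : Matrix n n ℂ) j i) = 1 := by
  have h := congrFun (congrFun (Unitary.coe_star_mul_self hA.eigenvectorUnitary) i) i
  have : ∑ j, (starRingEnd ℂ) ((hA.eigenvectorUnitary : Matrix n n ℂ) j i)
      * (hA.eigenvectorUnitary : Matrix n n ℂ) j i = 1 := by
    simpa [Matrix.mul_apply, Matrix.star_apply, Matrix.one_apply] using h
  have := congrArg Complex.re this
  simpa [Complex.normSq_eq_conj_mul_self, ← Complex.ofReal_sum, Complex.normSq_apply] using this

lemma crAux_row_normSq (d : n → ℝ) (hA : (Matrix.diagonal (fun i => (d i : ℂ))).IsHermitian)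
    (j : n) : ∑ i, Complex.normSq ((hA.eigenvectorUnitary : Matrix n n ℂ) j i) = 1 := by
  have h := congrFun (congrFun (Unitary.coe_mul_star_self hA.eigenvectorUnitary) j) j
  have : ∑ i, (hA.eigenvectorUnitary : Matrix n n ℂ) j i
      * (starRingEnd ℂ) ((hA.eigenvectorUnitary : Matrix n n ℂ) j i) = 1 := by
    simpa [Matrix.mul_apply, Matrix.star_apply, Matrix.one_apply] using h
  have := congrArg Complex.re this
  simpa [Complex.mul_conj, ← Complex.ofReal_sum] using this

lemma crAux_sum_f_eigenvalues (d : n → ℝ)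
    (hA : (Matrix.diagonal (fun i => (d i : ℂ))).IsHermitian)
    (f : ℝ → ℝ) : ∑ i, f (hA.eigenvalues i) = ∑ j, f (d j) := by
  set U := (hA.eigenvectorUnitary : Matrix n n ℂ) with hU
  calc ∑ i, f (hA.eigenvalues i)
      = ∑ i, ∑ j, f (hA.eigenvalues i) * Complex.normSq (U j i) := by
        refine Finset.sum_congr rfl fun i _ => ?_
        rw [← Finset.mul_sum, crAux_col_normSq d hA i, mul_one]
    _ = ∑ j, ∑ i, f (d j) * Complex.normSq (U j i) := by
        rw [Finset.sum_comm]
        refine Finset.sum_congr rfl fun j _ => Finset.sum_congr rfl fun i _ => ?_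
        rcases eq_or_ne (U j i) 0 with h0 | h0
        · simp [h0]
        · have := crAux_diag_col_rel d hA i j
          have hde : (d j : ℂ) = (hA.eigenvalues i : ℂ) := by
            field_simp at this; exact mul_right_cancel₀ h0 (this.trans (mul_comm _ _))
          rw [Complex.ofReal_inj.mp hde]
    _ = ∑ j, f (d j) := by
        refine Finset.sum_congr rfl fun j _ => ?_
        rw [← Finset.mul_sum, crAux_row_normSq d hA j, mul_one]

lemma crAux_matLog2_diagonal (d : n → ℝ) :
    matLog2 (Matrix.diagonal (fun i => (d i : ℂ)))
      = Matrix.diagonal (fun j => (Real.logb 2 (d j) : ℂ)) := by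
  have hA := crAux_isHermitian_diag_real d
  rw [matLog2, dif_pos hA]
  set U := (hA.eigenvectorUnitary : Matrix n n ℂ) with hU
  funext j k
  have hrow : ∀ i, (Real.logb 2 (hA.eigenvalues i) : ℂ) * U j i
      = (Real.logb 2 (d j) : ℂ) * U j i := by
    intro i
    rcases eq_or_ne (U j i) 0 with h0 | h0
    · simp [h0]
    · have := crAux_diag_col_rel d hA i j
      have hde : (d j : ℂ) = (hA.eigenvalues i : ℂ) := by
        field_simp at this; exact mul_right_cancel₀ h0 (this.trans (mul_comm _ _))
      rw [Complex.ofReal_inj.mp hde]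
  have hUU := congrFun (congrFun ((Matrix.mem_unitaryGroup_iff).mp hA.eigenvectorUnitary.2) j) k
  calc (U * Matrix.diagonal (fun i => (Real.logb 2 (hA.eigenvalues i) : ℂ)) * star U) j k
      = ∑ i, U j i * (Real.logb 2 (hA.eigenvalues i) : ℂ)
          * (starRingEnd ℂ) (U k i) := by
        rw [Matrix.mul_apply]
        exact Finset.sum_congr rfl fun i _ => by
          rw [Matrix.mul_diagonal, Matrix.star_apply, Complex.star_def]
    _ = (Real.logb 2 (d j) : ℂ) * ∑ i, U j i * (starRingEnd ℂ) (U k i) := by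
        rw [Finset.mul_sum]
        refine Finset.sum_congr rfl fun i _ => ?_
        have := hrow i
        ring_nf
        ring_nf at this
        rw [mul_comm (U j i)] at this ⊢
        rw [this]
        ring
    _ = Matrix.diagonal (fun j => (Real.logb 2 (d j) : ℂ)) j k := by
        have : ∑ i, U j i * (starRingEnd ℂ) (U k i) = (1 : Matrix n n ℂ) j k := by
          rw [← hUU, Matrix.mul_apply]
          exact Finset.sum_congr rfl fun i _ => by
            rw [Matrix.star_apply, Complex.star_def]
        rw [this]
        rcases eq_or_ne j k with h | h <;>
          simp [h, Matrix.one_apply, Matrix.diagonal_apply]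

lemma crAux_trace_mul_matLog2_self {ρ : Matrix n n ℂ} (h : ρ.IsHermitian) :
    (ρ * matLog2 ρ).trace
      = ∑ i, ((h.eigenvalues i * Real.logb 2 (h.eigenvalues i) : ℝ) : ℂ) := by
  rw [matLog2, dif_pos h, ← Matrix.mul_assoc, Matrix.trace_mul_cycle,
    ← Matrix.mul_assoc, crAux_star_mul_self_mul_eq_diagonal h,
    Matrix.diagonal_mul_diagonal, Matrix.trace_diagonal]
  refine Finset.sum_congr rfl fun i _ => ?_
  simp [Function.comp, Complex.coe_algebraMap]

lemma crAux_trace_mul_diagonal (ρ : Matrix n n ℂ) (c : n → ℂ) :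
    (ρ * Matrix.diagonal c).trace = ∑ j, ρ j j * c j := by
  simp [Matrix.trace, Matrix.mul_diagonal, Matrix.diag]

open scoped MatrixOrder in
lemma crAux_psd_row_col_zero {ρ : Matrix n n ℂ} (h : ρ.PosSemidef) {j : n} (hjj : ρ j j = 0)
    (k : n) : ρ j k = 0 ∧ ρ k j = 0 := by
  obtain ⟨a, ha⟩ := CStarAlgebra.nonneg_iff_eq_star_mul_self.mp h.nonneg
  have hcol : ∀ l, a l j = 0 := by
    have h1 : ∑ l, (Complex.normSq (a l j) : ℂ) = 0 := by
      rw [← hjj, ha]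
      simp [Matrix.mul_apply, Matrix.star_apply, Complex.normSq_eq_conj_mul_self]
    have h2 : ∑ l, Complex.normSq (a l j) = 0 := by exact_mod_cast h1
    intro l
    exact Complex.normSq_eq_zero.mp ((Finset.sum_eq_zero_iff_of_nonneg
      (fun l _ => Complex.normSq_nonneg (a l j))).mp h2 l (Finset.mem_univ l))
  have hkj : ρ k j = 0 := by
    rw [ha]
    simp [Matrix.mul_apply, hcol]
  refine ⟨?_, hkj⟩
  have := congrFun (congrFun h.isHermitian j) k
  rw [Matrix.conjTranspose_apply] at this
  rw [← this, hkj, star_zero]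

lemma crAux_gibbs {p q : n → ℝ} (hp : ∀ i, 0 ≤ p i) (hq : ∀ i, 0 ≤ q i)
    (hp1 : ∑ i, p i = 1) (hq1 : ∑ i, q i ≤ 1) (hz : ∀ i, q i = 0 → p i = 0) :
    ∑ i, p i * Real.logb 2 (q i) ≤ ∑ i, p i * Real.logb 2 (p i) := by
  have hlog2 : (0:ℝ) < Real.log 2 := Real.log_pos (by norm_num)
  have key : ∀ i, p i * Real.logb 2 (q i) - p i * Real.logb 2 (p i)
      ≤ (q i - p i) / Real.log 2 := by
    intro i
    rcases eq_or_lt_of_le (hp i) with h0 | h0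
    · rw [← h0]
      simp only [zero_mul, sub_zero, zero_sub, neg_zero, sub_zero]
      exact div_nonneg (hq i) hlog2.le
    · have hqi : 0 < q i := by
        rcases eq_or_lt_of_le (hq i) with h0' | h0'
        · exact absurd (hz i h0'.symm) (by linarith)
        · exact h0'
      have : Real.logb 2 (q i) - Real.logb 2 (p i) = Real.log (q i / p i) / Real.log 2 := by
        simp [Real.logb, Real.log_div hqi.ne' h0.ne', sub_div]
      rw [← mul_sub, this]
      have hlb : Real.log (q i / p i) ≤ q i / p i - 1 :=
        Real.log_le_sub_one_of_pos (by positivity)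
      calc p i * (Real.log (q i / p i) / Real.log 2)
          ≤ p i * ((q i / p i - 1) / Real.log 2) := by
            apply mul_le_mul_of_nonneg_left _ (le_of_lt h0)
            gcongr
        _ = (q i - p i) / Real.log 2 := by field_simp
  have hsum : ∑ i, (p i * Real.logb 2 (q i) - p i * Real.logb 2 (p i))
      ≤ ∑ i, (q i - p i) / Real.log 2 := Finset.sum_le_sum fun i _ => key i
  rw [Finset.sum_sub_distrib] at hsum
  have : ∑ i, (q i - p i) / Real.log 2 ≤ 0 := by
    rw [← Finset.sum_div, Finset.sum_sub_distrib, hp1]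
    apply div_nonpos_of_nonpos_of_nonneg <;> linarith
  linarith

lemma crAux_diag_mulVec (v : n → ℂ) (x : n → ℂ) (j : n) :
    (Matrix.diagonal v *ᵥ x) j = v j * x j := by
  simp [Matrix.mulVec, dotProduct, Matrix.diagonal_apply, ite_mul,
    Finset.sum_ite_eq]

lemma crAux_qRelEnt_diag_val (ρ : Matrix n n ℂ) (hH : ρ.IsHermitian) (q : n → ℝ)
    (hsupp : ∀ x : n → ℂ, Matrix.diagonal (fun i => (q i : ℂ)) *ᵥ x = 0 → ρ *ᵥ x = 0) :
    qRelEnt ρ (Matrix.diagonal (fun i => (q i : ℂ)))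
      = (((∑ i, hH.eigenvalues i * Real.logb 2 (hH.eigenvalues i))
          - ∑ j, (ρ j j).re * Real.logb 2 (q j) : ℝ) : EReal) := by
  rw [qRelEnt, if_pos hsupp, crAux_trace_mul_matLog2_self hH, crAux_matLog2_diagonal,
    crAux_trace_mul_diagonal]
  congr 1
  rw [Complex.sub_re, ← Complex.ofReal_sum, Complex.ofReal_re, Complex.re_sum]
  congr 1
  refine Finset.sum_congr rfl fun j _ => ?_
  simp [Complex.mul_re]

lemma crAux_supp_cond {ρ : Matrix n n ℂ} (hpsd : ρ.PosSemidef) (p : n → ℝ)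
    (hrr : ∀ j, ρ j j = (p j : ℂ)) :
    ∀ x : n → ℂ, Matrix.diagonal (fun i => (p i : ℂ)) *ᵥ x = 0 → ρ *ᵥ x = 0 := by
  intro x hx
  funext k
  have hterm : ∀ j, ρ k j * x j = 0 := by
    intro j
    rcases eq_or_ne (x j) 0 with h0 | h0
    · rw [h0, mul_zero]
    · have hdj : (p j : ℂ) * x j = 0 := by
        have := congrFun hx j
        rw [crAux_diag_mulVec] at this
        exact this
      have hpj : ρ j j = 0 := by
        rw [hrr j]
        rcases mul_eq_zero.mp hdj with h | h
        · rw [h]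
        · exact absurd h h0
      rw [(crAux_psd_row_col_zero hpsd hpj k).2, zero_mul]
  show (ρ *ᵥ x) k = 0
  simp only [Matrix.mulVec, dotProduct]
  exact Finset.sum_eq_zero fun j _ => hterm j

end crAux

/-- the dephased state is the closest incoherent state in relative
entropy, and the minimum equals S(Δ[ρ]) − S(ρ). -/
theorem Cr_is_min_relEnt_to_incoherent {d : ℕ}
    (ρ : Matrix (Fin d) (Fin d) ℂ) (hρ : IsDensity ρ) :
    IsLeast {x : EReal | ∃ σ : Matrix (Fin d) (Fin d) ℂ,
        IsDensity σ ∧ dephase σ = σ ∧ x = qRelEnt ρ σ}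
      ((Cr ρ : ℝ) : EReal) ∧
    qRelEnt ρ (dephase ρ) = ((Cr ρ : ℝ) : EReal) := by
  obtain ⟨hpsd, htr⟩ := hρ
  have hH : ρ.IsHermitian := hpsd.1
  set p : Fin d → ℝ := fun j => (ρ j j).re with hpdef
  have hrr : ∀ j, ρ j j = (p j : ℂ) := by
    intro j
    have h1 := congrFun (congrFun hH j) j
    rw [Matrix.conjTranspose_apply] at h1
    exact (Complex.conj_eq_iff_re.mp h1).symm
  have hdp : dephase ρ = Matrix.diagonal (fun j => (p j : ℂ)) := by
    unfold dephase
    exact congrArg Matrix.diagonal (funext hrr)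
  have hp0 : ∀ j, 0 ≤ p j := by
    intro j
    have h2 := hpsd.dotProduct_mulVec_nonneg (Pi.single j 1)
    have h3 : dotProduct (star (Pi.single j 1)) (ρ *ᵥ Pi.single j 1) = ρ j j := by
      simp [dotProduct, Matrix.mulVec, Pi.single_apply]
    rw [h3, hrr j] at h2
    exact_mod_cast (Complex.le_def.mp h2).1
  have hp1 : ∑ j, p j = 1 := by
    have h4 : (ρ.trace).re = 1 := by rw [htr]; rfl
    rw [Matrix.trace, Complex.re_sum] at h4
    exact h4
  -- entropy values
  have hvρ : vNEnt ρ = ∑ i, -(hH.eigenvalues i * Real.logb 2 (hH.eigenvalues i)) := by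
    rw [vNEnt, dif_pos hH]
  have hvd : vNEnt (dephase ρ) = ∑ j, -(p j * Real.logb 2 (p j)) := by
    rw [hdp, vNEnt, dif_pos (crAux_isHermitian_diag_real p)]
    exact crAux_sum_f_eigenvalues p _ (fun x => -(x * Real.logb 2 x))
  have hCr : Cr ρ = (∑ i, hH.eigenvalues i * Real.logb 2 (hH.eigenvalues i))
      - ∑ j, p j * Real.logb 2 (p j) := by
    rw [Cr, hvρ, hvd, Finset.sum_neg_distrib, Finset.sum_neg_distrib]
    ring
  -- part 2
  have hsuppP := crAux_supp_cond hpsd p hrr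
  have part2 : qRelEnt ρ (dephase ρ) = ((Cr ρ : ℝ) : EReal) := by
    rw [hdp, crAux_qRelEnt_diag_val ρ hH p hsuppP, hCr]
  refine ⟨⟨⟨dephase ρ, ?_, ?_, part2.symm⟩, ?_⟩, part2⟩
  · -- IsDensity (dephase ρ)
    constructor
    · rw [hdp]
      refine Matrix.posSemidef_diagonal_iff.mpr fun j => ?_
      rw [Complex.le_def]
      constructor
      · simpa using hp0 j
      · simp
    · rw [hdp, Matrix.trace_diagonal, ← Complex.ofReal_sum, hp1, Complex.ofReal_one]
  · -- dephase (dephase ρ) = dephase ρ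
    rw [hdp]
    unfold dephase
    exact congrArg Matrix.diagonal (funext fun j => Matrix.diagonal_apply_eq _ j)
  · -- lower bound
    rintro x ⟨σ, ⟨hσpsd, hσtr⟩, hσdia, rfl⟩
    have hσH : σ.IsHermitian := hσpsd.1
    set q : Fin d → ℝ := fun j => (σ j j).re with hqdef
    have hqrr : ∀ j, σ j j = (q j : ℂ) := by
      intro j
      have h1 := congrFun (congrFun hσH j) j
      rw [Matrix.conjTranspose_apply] at h1
      exact (Complex.conj_eq_iff_re.mp h1).symm
    have hσdiag : σ = Matrix.diagonal (fun j => (q j : ℂ)) := by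
      rw [← hσdia]
      unfold dephase
      exact congrArg Matrix.diagonal (funext hqrr)
    have hq0 : ∀ j, 0 ≤ q j := by
      intro j
      have h2 := hσpsd.dotProduct_mulVec_nonneg (Pi.single j 1)
      have h3 : dotProduct (star (Pi.single j 1)) (σ *ᵥ Pi.single j 1) = σ j j := by
        simp [dotProduct, Matrix.mulVec, Pi.single_apply]
      rw [h3, hqrr j] at h2
      exact_mod_cast (Complex.le_def.mp h2).1
    have hq1 : ∑ j, q j = 1 := by
      have h4 : (σ.trace).re = 1 := by rw [hσtr]; rfl
      rw [Matrix.trace, Complex.re_sum] at h4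
      exact h4
    rw [hσdiag]
    by_cases hcond : ∀ y : Fin d → ℂ, Matrix.diagonal (fun i => (q i : ℂ)) *ᵥ y = 0 →
        ρ *ᵥ y = 0
    · rw [crAux_qRelEnt_diag_val ρ hH q hcond]
      have hz : ∀ j, q j = 0 → p j = 0 := by
        intro j hqj
        have hy : Matrix.diagonal (fun i => (q i : ℂ)) *ᵥ Pi.single j 1 = 0 := by
          funext k
          rw [crAux_diag_mulVec]
          rcases eq_or_ne k j with h | h
          · subst h; simp [hqj]
          · simp [Pi.single_apply, h]
        have h5 := congrFun (hcond _ hy) j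
        have h6 : (ρ *ᵥ Pi.single j 1) j = ρ j j := by
          simp [Matrix.mulVec, dotProduct, Pi.single_apply]
        rw [h6] at h5
        have h7 : ρ j j = 0 := by simpa using h5
        rw [hrr j] at h7
        exact_mod_cast h7
      have hgibbs := crAux_gibbs hp0 hq0 hp1 hq1.le hz
      rw [hCr]
      apply EReal.coe_le_coe_iff.mpr
      have : ∀ j, (ρ j j).re = p j := fun j => rfl
      simp only [this]
      linarith
    · rw [qRelEnt, if_neg hcond]
      exact le_top
end

section
/- For any coherence quantifier C that is monotone under incoherent operations, the generalized cohering power is bounded by the coherence of the maximally coherent state: sup_ρ {C(Φ[ρ]) − C(ρ)} ≤ C(|+_d⟩⟨+_d|), where d is the output dimension and |+_d⟩ = (1/√d) Σ_j |j⟩. -/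
open scoped Kronecker
open Matrix
open scoped ComplexOrder

/-- A Kraus family consisting of incoherent Kraus operators:
each operator maps any basis vector to a multiple of a basis vector. -/
def IsIncoherentKraus {ι : Type*} {n m : ℕ} [Fintype ι]
    (K : ι → Matrix (Fin m) (Fin n) ℂ) : Prop :=
  ∀ (i : ι) (j : Fin n), ∃ (n' : Fin m) (c : ℂ), ∀ a, K i a j = if a = n' then c else 0


section AuxLemmas

open Matrix

lemma chanApply_isDensity {ι n m : Type*} [Fintype ι] [Fintype n] [Fintype m] [DecidableEq n]
    (K : ι → Matrix m n ℂ) (hK : IsTPKraus K) (ρ : Matrix n n ℂ) (hρ : IsDensity ρ) :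
    IsDensity (chanApply K ρ) := by
  constructor
  · exact Finset.sum_induction _ _ (fun a b ha hb => ha.add hb) .zero
      (fun i _ => hρ.1.mul_mul_conjTranspose_same (K i))
  · rw [chanApply, trace_sum]
    have h1 : ∀ i : ι, (K i * ρ * (K i)ᴴ).trace = ((K i)ᴴ * K i * ρ).trace := by
      intro i
      rw [trace_mul_cycle]
    rw [Finset.sum_congr rfl (fun i _ => h1 i), ← trace_sum, ← Finset.sum_mul, hK, one_mul, hρ.2]

lemma plusProj_isDensity {d : ℕ} (hd : 0 < d) : IsDensity (plusProj d) := by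
  have hd' : (d : ℂ) ≠ 0 := Nat.cast_ne_zero.mpr hd.ne'
  constructor
  · rw [posSemidef_iff_dotProduct_mulVec]; constructor
    · ext a b
      simp [plusProj, conjTranspose_apply, div_eq_mul_inv]
    · intro x
      have hmv : plusProj d *ᵥ x = fun _ => (1 / d : ℂ) * ∑ j, x j := by
        ext i
        simp [plusProj, mulVec, dotProduct, Finset.mul_sum]
      rw [hmv]
      have : dotProduct (star x) (fun _ => (1 / d : ℂ) * ∑ j, x j)
          = (1 / d : ℂ) * (star (∑ j, x j) * ∑ j, x j) := by
        simp only [dotProduct, Pi.star_apply]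
        rw [← Finset.sum_mul, ← star_sum]
        ring
      rw [this]
      refine mul_nonneg ?_ (star_mul_self_nonneg _)
      rw [show (1 / (d : ℂ)) = ((1 / (d : ℝ) : ℝ) : ℂ) by push_cast; ring]
      rw [← Complex.ofReal_zero, Complex.real_le_real]
      positivity
  · have : (plusProj d).trace = (d : ℂ) * (1 / d : ℂ) := by
      simp [plusProj, trace, Matrix.diag, Finset.sum_const, Finset.card_univ, nsmul_eq_mul]
    rw [this]
    field_simp

lemma exists_incoherent_to {d : ℕ} [NeZero d] (σ : Matrix (Fin d) (Fin d) ℂ)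
    (hσ : IsDensity σ) :
    ∃ (K : Fin d × Fin d → Matrix (Fin d) (Fin d) ℂ),
      IsTPKraus K ∧ IsIncoherentKraus K ∧ chanApply K (plusProj d) = σ := by
  have hd : 0 < d := Nat.pos_of_ne_zero (NeZero.ne d)
  have hdC : (d : ℂ) ≠ 0 := Nat.cast_ne_zero.mpr hd.ne'
  have h : σ.IsHermitian := hσ.1.1
  set U : Matrix (Fin d) (Fin d) ℂ := (h.eigenvectorUnitary : Matrix (Fin d) (Fin d) ℂ) with hU
  set s : Fin d → ℂ := fun k => (Real.sqrt (h.eigenvalues k) : ℂ) with hs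
  have hsqrt : ∀ k, s k * s k = (h.eigenvalues k : ℂ) := by
    intro k
    rw [hs, ← Complex.ofReal_mul, Real.mul_self_sqrt (hσ.1.eigenvalues_nonneg k)]
  have hsstar : ∀ k, star (s k) = s k := by
    intro k
    simp [hs, Complex.star_def, Complex.conj_ofReal]
  have hUU : star U * U = 1 := by
    rw [hU]
    exact Unitary.coe_star_mul_self h.eigenvectorUnitary
  have hUcol : ∀ k, ∑ a, star (U a k) * U a k = 1 := by
    intro k
    have h2 := congrFun (congrFun hUU k) k
    simp only [Matrix.mul_apply, Matrix.one_apply_eq] at h2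
    rw [← h2]
    exact Finset.sum_congr rfl fun a _ => by rw [Matrix.star_apply]
  have htr : ∑ k, (h.eigenvalues k : ℂ) = 1 := by
    have h2 : σ.trace = ∑ k, (h.eigenvalues k : ℂ) := by
      conv_lhs => rw [h.spectral_theorem]
      rw [Unitary.conjStarAlgAut_apply, trace_mul_cycle, ← hU, hUU, one_mul, trace_diagonal]
      rfl
    rw [← h2, hσ.2]
  set Kfam : Fin d × Fin d → Matrix (Fin d) (Fin d) ℂ :=
    fun kn => Matrix.of fun a j => if a = j - kn.2 then s kn.1 * U a kn.1 else 0 with hKfam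
  have hKapp : ∀ (kn : Fin d × Fin d) (a j : Fin d),
      Kfam kn a j = if a = j - kn.2 then s kn.1 * U a kn.1 else 0 := fun _ _ _ => rfl
  refine ⟨Kfam, ?_, ?_, ?_⟩
  · -- trace preserving
    rw [IsTPKraus]
    ext j j'
    rw [Matrix.sum_apply]
    by_cases hjj : j = j'
    · subst hjj
      rw [Matrix.one_apply_eq]
      have inner : ∀ kn : Fin d × Fin d,
          ((Kfam kn)ᴴ * Kfam kn) j j
          = (h.eigenvalues kn.1 : ℂ) * (star (U (j - kn.2) kn.1) * U (j - kn.2) kn.1) := by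
        intro kn
        rw [Matrix.mul_apply]
        rw [Finset.sum_eq_single (j - kn.2)]
        · rw [Matrix.conjTranspose_apply, hKapp, if_pos rfl, star_mul', hsstar]
          rw [show s kn.1 * star (U (j - kn.2) kn.1) * (s kn.1 * U (j - kn.2) kn.1)
            = (s kn.1 * s kn.1) * (star (U (j - kn.2) kn.1) * U (j - kn.2) kn.1) by ring,
            hsqrt]
        · intro a _ ha
          rw [Matrix.conjTranspose_apply, hKapp, if_neg ha, star_zero, zero_mul]
        · intro hmem
          exact absurd (Finset.mem_univ _) hmem
      rw [Finset.sum_congr rfl (fun kn _ => inner kn), Fintype.sum_prod_type]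
      dsimp only
      have hin : ∀ k : Fin d,
          ∑ n : Fin d, (h.eigenvalues k : ℂ) * (star (U (j - n) k) * U (j - n) k)
          = (h.eigenvalues k : ℂ) := by
        intro k
        rw [← Finset.mul_sum,
          show (∑ n : Fin d, star (U (j - n) k) * U (j - n) k)
            = ∑ a : Fin d, star (U a k) * U a k from
              Equiv.sum_comp (Equiv.subLeft j) (fun a => star (U a k) * U a k),
          hUcol, mul_one]
      rw [Finset.sum_congr rfl (fun k _ => hin k)]
      exact htr
    · rw [Matrix.one_apply_ne hjj]
      apply Finset.sum_eq_zero
      intro kn _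
      rw [Matrix.mul_apply]
      apply Finset.sum_eq_zero
      intro a _
      rw [Matrix.conjTranspose_apply, hKapp, hKapp]
      by_cases h1 : a = j - kn.2
      · have h2 : a ≠ j' - kn.2 := by
          intro h2
          exact hjj (by rwa [h1, sub_left_inj] at h2)
        rw [if_neg h2, mul_zero]
      · rw [if_neg h1, star_zero, zero_mul]
  · -- incoherent
    intro kn j
    refine ⟨j - kn.2, s kn.1 * U (j - kn.2) kn.1, fun a => ?_⟩
    rw [hKapp]
    by_cases h1 : a = j - kn.2
    · subst h1; simp
    · simp [h1]
  · -- maps plusProj to σ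
    rw [chanApply]
    ext a b
    rw [Matrix.sum_apply]
    have term : ∀ kn : Fin d × Fin d,
        (Kfam kn * plusProj d * (Kfam kn)ᴴ) a b
        = (1 / d : ℂ) * ((h.eigenvalues kn.1 : ℂ) * (U a kn.1 * star (U b kn.1))) := by
      intro kn
      rw [Matrix.mul_apply]
      have col : ∀ j', (Kfam kn * plusProj d) a j' = s kn.1 * U a kn.1 * (1 / d : ℂ) := by
        intro j'
        rw [Matrix.mul_apply]
        rw [Finset.sum_eq_single (a + kn.2)]
        · rw [hKapp, if_pos (by rw [add_sub_cancel_right])]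
          rfl
        · intro j _ hj
          rw [hKapp, if_neg, zero_mul]
          intro hcontra
          exact hj (by rw [hcontra]; exact (sub_add_cancel j kn.2).symm)
        · intro hmem
          exact absurd (Finset.mem_univ _) hmem
      rw [Finset.sum_congr rfl (fun j' _ => by rw [col j'])]
      rw [Finset.sum_eq_single (b + kn.2)]
      · rw [Matrix.conjTranspose_apply, hKapp, if_pos (by rw [add_sub_cancel_right]),
          star_mul', hsstar]
        rw [show s kn.1 * U a kn.1 * (1 / d : ℂ) * (s kn.1 * star (U b kn.1))
          = (1 / d : ℂ) * ((s kn.1 * s kn.1) * (U a kn.1 * star (U b kn.1))) by ring, hsqrt]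
      · intro j' _ hj'
        rw [Matrix.conjTranspose_apply, hKapp, if_neg, star_zero, mul_zero]
        intro hcontra
        exact hj' (by rw [hcontra]; exact (sub_add_cancel j' kn.2).symm)
      · intro hmem
        exact absurd (Finset.mem_univ _) hmem
    rw [Finset.sum_congr rfl (fun kn _ => term kn), Fintype.sum_prod_type]
    dsimp only
    have hin : ∀ k : Fin d,
        ∑ _n : Fin d, (1 / d : ℂ) * ((h.eigenvalues k : ℂ) * (U a k * star (U b k)))
        = (h.eigenvalues k : ℂ) * (U a k * star (U b k)) := by
      intro k
      rw [Finset.sum_const, Finset.card_univ, Fintype.card_fin, nsmul_eq_mul]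
      field_simp
    rw [Finset.sum_congr rfl (fun k _ => hin k)]
    conv_rhs => rw [h.spectral_theorem]
    rw [Unitary.conjStarAlgAut_apply, ← hU, Matrix.mul_apply]
    apply Finset.sum_congr rfl
    intro k _
    rw [Matrix.mul_diagonal, Matrix.star_apply]
    simp only [Function.comp_apply]
    rw [show (RCLike.ofReal (h.eigenvalues k) : ℂ) = (h.eigenvalues k : ℂ) from rfl]
    ring

end AuxLemmas

/-- for any coherence quantifier monotone under incoherent operations
(and nonnegative on states), the generalized cohering power is bounded by the
coherence of the maximally coherent state. -/
theorem generalized_cohering_power_bound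
    (C : ∀ d : ℕ, Matrix (Fin d) (Fin d) ℂ → ℝ)
    (hmono : ∀ (d d' : ℕ) (ι : Type) [Fintype ι] (K : ι → Matrix (Fin d') (Fin d) ℂ),
      IsTPKraus K → IsIncoherentKraus K →
        ∀ ρ, IsDensity ρ → C d' (chanApply K ρ) ≤ C d ρ)
    (hnonneg : ∀ (d : ℕ) (ρ : Matrix (Fin d) (Fin d) ℂ), IsDensity ρ → 0 ≤ C d ρ)
    {din d : ℕ} (hd : 0 < d) (ι : Type) [Fintype ι]
    (K : ι → Matrix (Fin d) (Fin din) ℂ) (hK : IsTPKraus K)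
    (ρ : Matrix (Fin din) (Fin din) ℂ) (hρ : IsDensity ρ) :
    C d (chanApply K ρ) - C din ρ ≤ C d (plusProj d) := by
  haveI : NeZero d := ⟨hd.ne'⟩
  have hden : IsDensity (chanApply K ρ) := chanApply_isDensity K hK ρ hρ
  obtain ⟨K', hTP, hInc, hEq⟩ := exists_incoherent_to (chanApply K ρ) hden
  have h1 := hmono d d (Fin d × Fin d) K' hTP hInc (plusProj d) (plusProj_isDensity hd)
  rw [hEq] at h1
  have h2 := hnonneg din ρ hρ
  linarith
end

section
/- The ℓ₁-norm of coherence is multiplicative up to 1 on product states: C_{ℓ₁}(ρ^A ⊗ σ^B) = [C_{ℓ₁}(ρ^A) + 1][C_{ℓ₁}(σ^B) + 1] − 1. -/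
open scoped Kronecker
open Matrix
open scoped ComplexOrder

lemma sum_abs_diag_eq_one {n : Type*} [Fintype n] {ρ : Matrix n n ℂ} (h : IsDensity ρ) :
    ∑ i, ‖ρ i i‖ = 1 := by
  classical
  have hd : ∀ i, ‖ρ i i‖ = (ρ i i).re := by
    intro i
    have h0 : 0 ≤ ρ i i := h.1.diag_nonneg
    rw [Complex.le_def] at h0
    have him : (ρ i i).im = 0 := by simpa using h0.2.symm
    have hre : 0 ≤ (ρ i i).re := by simpa using h0.1
    rw [Complex.norm_def, Complex.normSq_apply, him, mul_zero, add_zero,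
      Real.sqrt_mul_self hre]
  simp_rw [hd]
  rw [← Complex.re_sum]
  have := h.2
  rw [Matrix.trace] at this
  simp only [Matrix.diag] at this
  simp [this]

lemma Cl1_eq {n : Type*} [Fintype n] [DecidableEq n] (ρ : Matrix n n ℂ) :
    Cl1 ρ = (∑ i, ∑ j, ‖ρ i j‖) - ∑ i, ‖ρ i i‖ := by
  unfold Cl1
  rw [← Finset.sum_sub_distrib]
  refine Finset.sum_congr rfl fun i _ => ?_
  have key : (∑ j, if i = j then ‖ρ i j‖ else 0) = ‖ρ i i‖ := by simp
  calc (∑ j, if i = j then 0 else ‖ρ i j‖)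
      = ∑ j, (‖ρ i j‖ - if i = j then ‖ρ i j‖ else 0) := by
        refine Finset.sum_congr rfl fun j _ => ?_
        by_cases h : i = j <;> simp [h]
    _ = _ := by rw [Finset.sum_sub_distrib, key]

/-- the ℓ₁-norm of coherence is multiplicative up to 1 on products. -/
theorem Cl1_product {dA dB : ℕ}
    (ρ : Matrix (Fin dA) (Fin dA) ℂ) (σ : Matrix (Fin dB) (Fin dB) ℂ)
    (hρ : IsDensity ρ) (hσ : IsDensity σ) :
    Cl1 (ρ ⊗ₖ σ) = (Cl1 ρ + 1) * (Cl1 σ + 1) - 1 := by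
  have hρ1 := sum_abs_diag_eq_one hρ
  have hσ1 := sum_abs_diag_eq_one hσ
  rw [Cl1_eq (ρ ⊗ₖ σ), Cl1_eq ρ, Cl1_eq σ, hρ1, hσ1]
  have habs : ∀ (p q : Fin dA × Fin dB),
      ‖(ρ ⊗ₖ σ) p q‖ = ‖ρ p.1 q.1‖ * ‖σ p.2 q.2‖ := by
    intro p q
    simp [Matrix.kroneckerMap_apply, AbsoluteValue.map_mul]
  have h1 : (∑ p : Fin dA × Fin dB, ∑ q : Fin dA × Fin dB, ‖(ρ ⊗ₖ σ) p q‖)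
      = (∑ i, ∑ j, ‖ρ i j‖) * (∑ k, ∑ l, ‖σ k l‖) := by
    simp_rw [habs]
    calc (∑ p : Fin dA × Fin dB, ∑ q : Fin dA × Fin dB,
            ‖ρ p.1 q.1‖ * ‖σ p.2 q.2‖)
        = ∑ p : Fin dA × Fin dB,
            (∑ j, ‖ρ p.1 j‖) * (∑ l, ‖σ p.2 l‖) := by
          refine Finset.sum_congr rfl fun p _ => ?_
          rw [Fintype.sum_prod_type, Finset.sum_mul_sum]
      _ = (∑ i, ∑ j, ‖ρ i j‖) * (∑ k, ∑ l, ‖σ k l‖) := by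
          rw [Fintype.sum_prod_type]; exact (Finset.sum_mul_sum Finset.univ Finset.univ (fun i => ∑ j, ‖ρ i j‖) (fun k => ∑ l, ‖σ k l‖)).symm
  have h2 : (∑ p : Fin dA × Fin dB, ‖(ρ ⊗ₖ σ) p p‖) = 1 := by
    simp_rw [habs, Fintype.sum_prod_type, ← Finset.mul_sum, hσ1, mul_one, hρ1]
  rw [h1, h2]
  ring
end

section
/- The ℓ₁-norm of coherence of the d-dimensional maximally coherent state is C_{ℓ₁}(|+_d⟩⟨+_d|) = d − 1, and this is the maximum value of C_{ℓ₁} over all states of dimension d. -/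
open scoped Kronecker
open Matrix
open scoped ComplexOrder

lemma offdiag_bound {n : Type*} [Fintype n] [DecidableEq n] {ρ : Matrix n n ℂ}
    (h : ρ.PosSemidef) (i j : n) (hij : i ≠ j) :
    2 * ‖ρ i j‖ ≤ (ρ i i).re + (ρ j j).re := by
  set z := ρ i j with hz
  set b : ℂ := if z = 0 then -1 else -(starRingEnd ℂ z) / (‖z‖ : ℂ) with hb
  have hbz : b * z = -(‖z‖ : ℂ) := by
    by_cases h0 : z = 0
    · simp [hb, h0]
    · have hc : (‖z‖ : ℂ) ≠ 0 := by exact_mod_cast (norm_ne_zero_iff.mpr h0)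
      rw [hb, if_neg h0, div_mul_eq_mul_div, neg_mul, Complex.conj_mul', neg_div, pow_two,
        mul_div_assoc, div_self hc, mul_one]
  have hbb : (starRingEnd ℂ b) * b = 1 := by
    by_cases h0 : z = 0
    · simp [hb, h0]
    · have ha : ‖z‖ ≠ 0 := by simpa using h0
      simp only [hb, h0, if_false]
      rw [map_div₀, map_neg]
      have hc : (‖z‖ : ℂ) ≠ 0 := by exact_mod_cast ha
      rw [Complex.conj_conj, Complex.conj_ofReal, div_mul_div_comm, neg_mul_neg,
        Complex.mul_conj', ← pow_two, div_self (pow_ne_zero 2 hc)]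
  have hji : ρ j i = starRingEnd ℂ z := by
    simpa using (h.isHermitian.apply j i).symm
  clear hb
  clear_value b
  set x : n → ℂ := Pi.single i 1 + Pi.single j b with hx
  have hQ := h.re_dotProduct_nonneg x
  have hsx : star x = Pi.single i 1 + Pi.single j (starRingEnd ℂ b) := by
    funext p
    simp only [hx, Pi.add_apply, Pi.star_apply, star_add, Pi.single_apply]
    split_ifs <;> simp
  have hexp : dotProduct (star x) (ρ *ᵥ x)
      = ρ i i + z * b + (starRingEnd ℂ b) * (starRingEnd ℂ z) + (starRingEnd ℂ b) * b * ρ j j := by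
    rw [hsx, hx, Matrix.mulVec_add, Matrix.mulVec_single, Matrix.mulVec_single]
    simp only [dotProduct_add, add_dotProduct, single_dotProduct]
    simp [hji, hij, hij.symm]
    ring
  rw [hexp] at hQ
  have hconj : (starRingEnd ℂ b) * (starRingEnd ℂ z) = starRingEnd ℂ (z * b) := by
    rw [_root_.map_mul]; ring
  rw [hconj, mul_comm z b, hbz, hbb, one_mul] at hQ
  simp only [RCLike.re_to_complex, map_neg, Complex.conj_ofReal, Complex.add_re,
    Complex.neg_re, Complex.ofReal_re] at hQ
  linarith

lemma sum_offdiag_const (d : ℕ) (c : ℝ) :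
    ∑ i : Fin d, ∑ j : Fin d, (if i = j then (0:ℝ) else c) = d * (d * c - c) := by
  have h1 : ∀ i : Fin d, ∑ j : Fin d, (if i = j then (0:ℝ) else c) = d * c - c := by
    intro i
    have he : ∀ j : Fin d, (if i = j then (0:ℝ) else c) = c - (if i = j then c else 0) := by
      intro j; split_ifs <;> ring
    simp only [he, Finset.sum_sub_distrib, Finset.sum_const, Finset.sum_ite_eq,
      Finset.mem_univ, if_true, Finset.card_univ, Fintype.card_fin, nsmul_eq_mul]
  simp [h1, Finset.sum_const, mul_comm]; ring

/-- the ℓ₁-coherence of any maximally coherent state is d − 1,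
and this is the maximum over all d-dimensional states. -/
theorem Cl1_max_coherent {d : ℕ} (hd : 0 < d) (θ : Fin d → ℝ) :
    Cl1 (Matrix.vecMulVec
        (fun j => Complex.exp ((θ j : ℂ) * Complex.I) / (Real.sqrt d : ℂ))
        (fun j => (starRingEnd ℂ)
          (Complex.exp ((θ j : ℂ) * Complex.I) / (Real.sqrt d : ℂ)))) = d - 1 ∧
    ∀ ρ : Matrix (Fin d) (Fin d) ℂ, IsDensity ρ → Cl1 ρ ≤ d - 1 := by
  have hd0 : (d:ℝ) ≠ 0 := Nat.cast_ne_zero.mpr hd.ne'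
  have hdpos : (0:ℝ) < (d:ℝ) := by exact_mod_cast hd
  constructor
  · -- part 1
    set u : Fin d → ℂ := fun j => Complex.exp ((θ j : ℂ) * Complex.I) / (Real.sqrt d : ℂ) with hu
    have habsu : ∀ k, ‖u k‖ = 1 / Real.sqrt d := by
      intro k
      simp [hu, norm_div, Complex.norm_exp]
    have habs : ∀ i j : Fin d,
        ‖Matrix.vecMulVec u (fun j => starRingEnd ℂ (u j)) i j‖ = 1 / d := by
      intro i j
      rw [Matrix.vecMulVec_apply, norm_mul, Complex.norm_conj, habsu, habsu]
      rw [div_mul_div_comm, one_mul, Real.mul_self_sqrt hdpos.le]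
    unfold Cl1
    have he : ∀ i j : Fin d,
        (if i = j then (0:ℝ)
          else ‖Matrix.vecMulVec u (fun j => starRingEnd ℂ (u j)) i j‖)
        = (if i = j then (0:ℝ) else 1 / d) := by
      intro i j; split_ifs with h; · rfl
      · exact habs i j
    calc ∑ i : Fin d, ∑ j : Fin d,
          (if i = j then (0:ℝ)
            else ‖Matrix.vecMulVec u (fun j => starRingEnd ℂ (u j)) i j‖)
        = ∑ i : Fin d, ∑ j : Fin d, (if i = j then (0:ℝ) else 1 / d) := by
          exact Finset.sum_congr rfl fun i _ => Finset.sum_congr rfl fun j _ => he i j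
      _ = d * (d * (1/d) - 1/d) := sum_offdiag_const d (1/d)
      _ = d - 1 := by field_simp
  · -- part 2
    intro ρ hρ
    set a : Fin d → ℝ := fun i => (ρ i i).re with ha
    have hS : ∑ i, a i = 1 := by
      have := congrArg Complex.re hρ.2
      simpa [Matrix.trace, Matrix.diag, Complex.re_sum, ha] using this
    have hbound : ∀ i j : Fin d, i ≠ j → ‖ρ i j‖ ≤ (a i + a j) / 2 := by
      intro i j hij
      have := offdiag_bound hρ.1 i j hij
      simp only [ha]
      linarith
    have hle : Cl1 ρ ≤ ∑ i : Fin d, ∑ j : Fin d, (if i = j then (0:ℝ) else (a i + a j)/2) := by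
      unfold Cl1
      refine Finset.sum_le_sum fun i _ => Finset.sum_le_sum fun j _ => ?_
      split_ifs with h
      · exact le_refl 0
      · exact hbound i j h
    refine hle.trans (le_of_eq ?_)
    have hin : ∀ i : Fin d, ∑ j : Fin d, (if i = j then (0:ℝ) else (a i + a j)/2)
        = ((d:ℝ) * a i + 1)/2 - a i := by
      intro i
      have he : ∀ j : Fin d, (if i = j then (0:ℝ) else (a i + a j)/2)
          = (a i + a j)/2 - (if i = j then (a i + a j)/2 else 0) := by
        intro j; split_ifs <;> ring
      rw [Finset.sum_congr rfl fun j _ => he j, Finset.sum_sub_distrib]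
      rw [Finset.sum_ite_eq _ i _]
      have h2 : ∑ j : Fin d, (a i + a j)/2 = ((d:ℝ) * a i + 1)/2 := by
        rw [← Finset.sum_div, Finset.sum_add_distrib, Finset.sum_const, hS,
          Finset.card_univ, Fintype.card_fin, nsmul_eq_mul]
      rw [h2]
      simp
    rw [Finset.sum_congr rfl fun i _ => hin i, Finset.sum_sub_distrib, hS]
    have h3 : ∑ x : Fin d, ((d:ℝ) * a x + 1)/2 = ((d:ℝ) + d)/2 := by
      rw [← Finset.sum_div, Finset.sum_add_distrib, ← Finset.mul_sum, hS, Finset.sum_const,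
        Finset.card_univ, Fintype.card_fin, nsmul_eq_mul, mul_one]
    rw [h3]; ring
end
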